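/- arXiv:2008.09864 — 4 statements merged into one kernel-verified Lean document; each statement's English description precedes it below -/
import Mathlib

section
/- Let G be a finite undirected graph with non-negative edge weights, adjacency matrix A, and degree matrix D. Define the augmented normalized adjacency = (D+I)^{-1/2}(A+I)(D+I)^{-1/2}. Then every eigenvalue λ of satisfies -1 < λ ≤ 1. -/
open Matrix

/-!
With `w = (D+I)^{-1/2} v` the eigen-equation gives the Rayleigh identity
`μ · wᵀ(D+I)w = wᵀ(A+I)w`. Expanding `∑ᵢⱼ Aᵢⱼ (wᵢ ± wⱼ)² ≥ 0` bounds `|wᵀAw|` by `wᵀDw`, so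
`wᵀ(A+I)w` lies between `-wᵀ(D+I)w + 2‖w‖²` and `wᵀ(D+I)w`; the self-loops make `‖w‖² > 0`
the margin that keeps `μ` away from `-1`.
-/

section QuadraticForm

variable {ι : Type*} [Fintype ι] {A : Matrix ι ι ℝ}

theorem dotProduct_self_pos_of_ne_zero {w : ι → ℝ} (hw : w ≠ 0) : 0 < w ⬝ᵥ w :=
  lt_of_le_of_ne (Finset.sum_nonneg fun i _ => mul_self_nonneg (w i))
    (Ne.symm (dotProduct_self_eq_zero.not.mpr hw))

theorem sum_sum_mul_add_mul_sq (hA : A.IsSymm) (w : ι → ℝ) (c : ℝ) :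
    ∑ i, ∑ j, A i j * (w i + c * w j) ^ 2 =
      (1 + c ^ 2) * ∑ i, (∑ j, A i j) * w i ^ 2 + 2 * c * (w ⬝ᵥ A *ᵥ w) := by
  have hswap : ∑ i, ∑ j, A i j * w j ^ 2 = ∑ i, (∑ j, A i j) * w i ^ 2 := by
    rw [Finset.sum_comm]
    simp only [Finset.sum_mul, hA.apply]
  have hexpand : ∀ i j, A i j * (w i + c * w j) ^ 2 =
      A i j * w i ^ 2 + c ^ 2 * (A i j * w j ^ 2) + 2 * c * (w i * (A i j * w j)) := by
    intro i j; ring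
  simp only [hexpand, Finset.sum_add_distrib, ← Finset.mul_sum, ← Finset.sum_mul, hswap]
  simp only [dotProduct, mulVec]
  ring

theorem abs_dotProduct_mulVec_le (hA : A.IsSymm) (hA₀ : ∀ i j, 0 ≤ A i j) (w : ι → ℝ) :
    |w ⬝ᵥ A *ᵥ w| ≤ ∑ i, (∑ j, A i j) * w i ^ 2 := by
  have hnonneg : ∀ c : ℝ, 0 ≤ ∑ i, ∑ j, A i j * (w i + c * w j) ^ 2 := fun c =>
    Finset.sum_nonneg fun i _ => Finset.sum_nonneg fun j _ => mul_nonneg (hA₀ i j) (sq_nonneg _)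
  have hplus := hnonneg 1
  have hminus := hnonneg (-1)
  rw [sum_sum_mul_add_mul_sq hA] at hplus hminus
  rw [abs_le]
  constructor <;> linarith

variable [DecidableEq ι]

theorem dotProduct_add_one_mulVec_mem_Ioc (hA : A.IsSymm) (hA₀ : ∀ i j, 0 ≤ A i j)
    {w : ι → ℝ} (hw : w ≠ 0) :
    w ⬝ᵥ (A + 1) *ᵥ w ∈
      Set.Ioc (-∑ i, (∑ j, A i j + 1) * w i ^ 2) (∑ i, (∑ j, A i j + 1) * w i ^ 2) := by
  have hsplit : w ⬝ᵥ (A + 1) *ᵥ w = w ⬝ᵥ A *ᵥ w + w ⬝ᵥ w := by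
    rw [add_mulVec, one_mulVec, dotProduct_add]
  have hweight : ∑ i, (∑ j, A i j + 1) * w i ^ 2 = ∑ i, (∑ j, A i j) * w i ^ 2 + w ⬝ᵥ w := by
    simp only [add_mul, one_mul, Finset.sum_add_distrib, dotProduct, sq]
  have hdeg : 0 ≤ ∑ i, (∑ j, A i j) * w i ^ 2 :=
    Finset.sum_nonneg fun i _ =>
      mul_nonneg (Finset.sum_nonneg fun j _ => hA₀ i j) (sq_nonneg _)
  have hnorm := dotProduct_self_pos_of_ne_zero hw
  have hbound := abs_le.mp (abs_dotProduct_mulVec_le hA hA₀ w)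
  rw [hsplit, hweight]
  constructor <;> linarith [hbound.1, hbound.2]

theorem dotProduct_diagonal_mul_mul_diagonal_mulVec (s v : ι → ℝ) (M : Matrix ι ι ℝ) :
    v ⬝ᵥ (diagonal s * M * diagonal s) *ᵥ v = (s * v) ⬝ᵥ M *ᵥ (s * v) := by
  have hdiag : ∀ u, diagonal s *ᵥ u = s * u := fun u => funext fun i => mulVec_diagonal s u i
  rw [← mulVec_mulVec, ← mulVec_mulVec, hdiag, hdiag]
  simp only [dotProduct, Pi.mul_apply]
  exact Finset.sum_congr rfl fun i _ => by ring

end QuadraticForm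

/-- Every eigenvalue of the augmented normalized adjacency
`Â = (D+I)^{-1/2} (A+I) (D+I)^{-1/2}` lies in `(-1, 1]`. -/
theorem augmented_adjacency_eigenvalue_bounds
    (N : ℕ) (A : Matrix (Fin N) (Fin N) ℝ)
    (hsymm : A.IsSymm) (hnonneg : ∀ i j, 0 ≤ A i j)
    (deg : Fin N → ℝ) (hdeg : ∀ i, deg i = ∑ j, A i j)
    (S : Matrix (Fin N) (Fin N) ℝ)
    (hS : S = Matrix.diagonal (fun i => 1 / Real.sqrt (deg i + 1)))
    (hatA : Matrix (Fin N) (Fin N) ℝ)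
    (hhat : hatA = S * (A + 1) * S)
    (μ : ℝ) (v : Fin N → ℝ) (hv : v ≠ 0)
    (heig : hatA.mulVec v = μ • v) :
    -1 < μ ∧ μ ≤ 1 := by
  set s : Fin N → ℝ := fun i => 1 / Real.sqrt (deg i + 1)
  have hdeg₁ : ∀ i, 0 < deg i + 1 := fun i => by
    rw [hdeg i]; linarith [Finset.sum_nonneg fun j (_ : j ∈ Finset.univ) => hnonneg i j]
  have hw : s * v ≠ 0 := fun h => hv <| funext fun i => by
    simpa [s, (Real.sqrt_pos.mpr (hdeg₁ i)).ne'] using congrFun h i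
  have hrayleigh : (s * v) ⬝ᵥ (A + 1) *ᵥ (s * v) = μ * (v ⬝ᵥ v) := by
    rw [← dotProduct_diagonal_mul_mul_diagonal_mulVec, ← hS, ← hhat, heig, dotProduct_smul,
      smul_eq_mul]
  have hweight : ∑ i, (∑ j, A i j + 1) * (s * v) i ^ 2 = v ⬝ᵥ v := by
    refine Finset.sum_congr rfl fun i _ => ?_
    have hsqrt := Real.sq_sqrt (hdeg₁ i).le
    rw [← hdeg i, Pi.mul_apply, mul_pow, div_pow, hsqrt]
    field_simp [(hdeg₁ i).ne']
  have hv₀ := dotProduct_self_pos_of_ne_zero hv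
  obtain ⟨hlower, hupper⟩ := dotProduct_add_one_mulVec_mem_Ioc hsymm hnonneg hw
  rw [hrayleigh, hweight] at hlower hupper
  constructor
  · exact lt_of_mul_lt_mul_right (by linarith) hv₀.le
  · exact le_of_mul_le_mul_right (by linarith) hv₀
end

section
/- Let ∈ ℝ^{N×N} be symmetric with eigendecomposition in which the eigenspace for eigenvalue 1 equals the column span of Ê (orthonormal columns), and all other eigenvalues have absolute value at most λ < 1. Let M = {ÊC : C ∈ ℝ^{M×C}} and d_M(H) = inf_{Y∈M} ‖H − Y‖_F. Then for any H ∈ ℝ^{N×C}, d_M(ÂH) ≤ λ · d_M(H). -/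
/-!
Let `P = Ê Êᵀ`, the orthogonal projection onto the eigenvalue-1 eigenspace of `Â`. Then `Â - P` is
symmetric and each of its eigenvalues is `0` or an eigenvalue of `Â` other than `1`, so it shrinks
Frobenius norms by the factor `λ`. For `Y = Ê C ∈ M`, the matrix `Y' = Y + P (H - Y)` lies in `M`
and `Â H - Y' = (Â - P) (H - Y)` because `Â Y = Y`; hence `d_M(Â H) ≤ λ ‖H - Y‖_F` for every such
`Y`.
-/

open Matrix

/-- The Frobenius norm on real `N × C` matrices. -/
noncomputable def frobNorm {N C : ℕ} (H : Matrix (Fin N) (Fin C) ℝ) : ℝ :=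
  Real.sqrt (∑ i, ∑ j, (H i j) ^ 2)

/-- The Frobenius distance from a matrix to a set of matrices. -/
noncomputable def distTo {N C : ℕ} (S : Set (Matrix (Fin N) (Fin C) ℝ))
    (H : Matrix (Fin N) (Fin C) ℝ) : ℝ :=
  sInf ((fun Y => frobNorm (H - Y)) '' S)

open WithLp (toLp ofLp)

theorem LinearMap.IsSymmetric.norm_apply_le_of_forall_hasEigenvalue {𝕜 E : Type*} [RCLike 𝕜]
    [NormedAddCommGroup E] [InnerProductSpace 𝕜 E] [FiniteDimensional 𝕜 E]
    {T : E →ₗ[𝕜] E} (hT : T.IsSymmetric) {lam : ℝ} (hlam : 0 ≤ lam)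
    (h : ∀ μ : ℝ, Module.End.HasEigenvalue T μ → |μ| ≤ lam) (x : E) :
    ‖T x‖ ≤ lam * ‖x‖ := by
  set b := hT.eigenvectorBasis rfl
  rw [← sq_le_sq₀ (norm_nonneg _) (by positivity), mul_pow, ← b.repr.norm_map, ← b.repr.norm_map,
    EuclideanSpace.norm_sq_eq, EuclideanSpace.norm_sq_eq, Finset.mul_sum]
  refine Finset.sum_le_sum fun i _ => ?_
  rw [hT.eigenvectorBasis_apply_self_apply, norm_mul, mul_pow, RCLike.norm_ofReal]
  have := h _ (hT.hasEigenvalue_eigenvalues rfl i)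
  gcongr

theorem Matrix.IsSymm.norm_toLp_mulVec_le {n : Type*} [Fintype n] [DecidableEq n]
    {B : Matrix n n ℝ} (hB : B.IsSymm) {lam : ℝ} (hlam : 0 ≤ lam)
    (h : ∀ (μ : ℝ) (v : n → ℝ), v ≠ 0 → B *ᵥ v = μ • v → |μ| ≤ lam) (v : n → ℝ) :
    ‖toLp 2 (B *ᵥ v)‖ ≤ lam * ‖toLp 2 v‖ := by
  have hT : (toEuclideanLin B).IsSymmetric :=
    isSymmetric_toEuclideanLin_iff.2 (isHermitian_iff_isSymm.2 hB)
  refine hT.norm_apply_le_of_forall_hasEigenvalue hlam (fun μ hμ => ?_) (toLp 2 v)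
  obtain ⟨w, hw, hw0⟩ := hμ.exists_hasEigenvector
  exact h μ (ofLp w) (by simpa using hw0) (congrArg ofLp (Module.End.mem_eigenspace_iff.1 hw))

theorem frobNorm_sq {N C : ℕ} (X : Matrix (Fin N) (Fin C) ℝ) :
    frobNorm X ^ 2 = ∑ j, ‖toLp 2 (X.col j)‖ ^ 2 := by
  simp only [frobNorm, EuclideanSpace.real_norm_sq_eq, col_apply]
  rw [Real.sq_sqrt (by positivity), Finset.sum_comm]

theorem frobNorm_nonneg {N C : ℕ} (X : Matrix (Fin N) (Fin C) ℝ) : 0 ≤ frobNorm X :=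
  Real.sqrt_nonneg _

theorem frobNorm_mul_le_of_forall_norm_mulVec_le {N C : ℕ} {B : Matrix (Fin N) (Fin N) ℝ}
    {lam : ℝ} (hlam : 0 ≤ lam)
    (hB : ∀ v, ‖toLp 2 (B *ᵥ v)‖ ≤ lam * ‖toLp 2 v‖) (X : Matrix (Fin N) (Fin C) ℝ) :
    frobNorm (B * X) ≤ lam * frobNorm X := by
  rw [← sq_le_sq₀ (frobNorm_nonneg _) (by positivity [frobNorm_nonneg X]), mul_pow, frobNorm_sq,
    frobNorm_sq, Finset.mul_sum]
  refine Finset.sum_le_sum fun j _ => ?_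
  rw [← mul_pow, ← mulVec_single_one, ← mulVec_mulVec, mulVec_single_one]
  exact pow_le_pow_left₀ (norm_nonneg _) (hB _) 2

theorem distTo_le_mul_of_forall_exists {N C : ℕ} {S : Set (Matrix (Fin N) (Fin C) ℝ)}
    (hS : S.Nonempty) {lam : ℝ} (hlam : 0 ≤ lam) {G H : Matrix (Fin N) (Fin C) ℝ}
    (h : ∀ Y ∈ S, ∃ Y' ∈ S, frobNorm (G - Y') ≤ lam * frobNorm (H - Y)) :
    distTo S G ≤ lam * distTo S H := by
  rw [distTo, distTo, ← smul_eq_mul, ← Real.sInf_smul_of_nonneg hlam]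
  refine le_csInf ((hS.image _).smul_set) ?_
  rintro _ ⟨_, ⟨Y, hY, rfl⟩, rfl⟩
  obtain ⟨Y', hY', hle⟩ := h Y hY
  have hbdd : BddBelow ((fun Y => frobNorm (G - Y)) '' S) :=
    ⟨0, by rintro _ ⟨Z, -, rfl⟩; exact frobNorm_nonneg _⟩
  exact (csInf_le hbdd ⟨Y', hY', rfl⟩).trans hle

theorem Matrix.mul_transpose_mulVec_eq_self_of_mem_span_col {R n m : Type*} [CommRing R]
    [Fintype n] [Fintype m] [DecidableEq m] {E : Matrix n m R} (hE : Eᵀ * E = 1) {v : n → R}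
    (hv : v ∈ Submodule.span R (Set.range E.col)) : (E * Eᵀ) *ᵥ v = v := by
  obtain ⟨c, rfl⟩ := (range_mulVecLin E ▸ hv : v ∈ LinearMap.range E.mulVecLin)
  rw [mulVecLin_apply, mulVec_mulVec, Matrix.mul_assoc, hE, Matrix.mul_one]

theorem Matrix.abs_le_of_sub_mulVec_eq_smul {𝕜 n : Type*} [Field 𝕜] [LinearOrder 𝕜]
    [IsStrictOrderedRing 𝕜] [Fintype n] {A P : Matrix n n 𝕜}
    (hPA : P * A = P) (hPP : P * P = P) (hfix : ∀ v, A *ᵥ v = v → P *ᵥ v = v)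
    {lam : 𝕜} (hlam : 0 ≤ lam)
    (hA : ∀ (μ : 𝕜) (v : n → 𝕜), v ≠ 0 → A *ᵥ v = μ • v → μ = 1 ∨ |μ| ≤ lam)
    {μ : 𝕜} {v : n → 𝕜} (hv : v ≠ 0) (h : (A - P) *ᵥ v = μ • v) : |μ| ≤ lam := by
  rcases eq_or_ne μ 0 with rfl | hμ
  · simpa using hlam
  have hPv : P *ᵥ v = 0 := by
    have := congrArg (P *ᵥ ·) h
    simp only [mulVec_mulVec, Matrix.mul_sub, hPA, hPP, sub_self, zero_mulVec, mulVec_smul] at this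
    exact (smul_eq_zero.1 this.symm).resolve_left hμ
  have hAv : A *ᵥ v = μ • v := by rwa [sub_mulVec, hPv, sub_zero] at h
  refine (hA μ v hv hAv).resolve_left fun h1 => hv ?_
  rw [← hfix v (by rw [hAv, h1, one_smul]), hPv]

theorem dist_to_subspace_mul_adjacency_general
    (N M C : ℕ) (hatA : Matrix (Fin N) (Fin N) ℝ) (hsymm : hatA.IsSymm)
    (E : Matrix (Fin N) (Fin M) ℝ) (hortho : Eᵀ * E = 1)
    (lam : ℝ) (hlam0 : 0 ≤ lam)
    (hEig1 : ∀ v : Fin N → ℝ, hatA.mulVec v = v ↔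
      v ∈ Submodule.span ℝ (Set.range fun m => fun i => E i m))
    (hOther : ∀ (μ : ℝ) (v : Fin N → ℝ), v ≠ 0 → hatA.mulVec v = μ • v →
      μ = 1 ∨ |μ| ≤ lam)
    (MS : Set (Matrix (Fin N) (Fin C) ℝ))
    (hMS : MS = {H | ∃ Cm : Matrix (Fin M) (Fin C) ℝ, H = E * Cm})
    (H : Matrix (Fin N) (Fin C) ℝ) :
    distTo MS (hatA * H) ≤ lam * distTo MS H := by
  subst hMS
  set P := E * Eᵀ
  have hAE : hatA * E = E := ext_col fun j => by
    rw [← mulVec_single_one, ← mulVec_mulVec, mulVec_single_one]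
    exact (hEig1 _).2 (Submodule.subset_span ⟨j, rfl⟩)
  have hPA : P * hatA = P := by
    rw [Matrix.mul_assoc, ← hsymm.eq, ← transpose_mul, hAE]
  have hPP : P * P = P := by
    rw [Matrix.mul_assoc, ← Matrix.mul_assoc Eᵀ, hortho, Matrix.one_mul]
  have hfix (v) (hv : hatA *ᵥ v = v) : P *ᵥ v = v :=
    mul_transpose_mulVec_eq_self_of_mem_span_col hortho ((hEig1 v).1 hv)
  have hB : (hatA - P).IsSymm :=
    hsymm.sub <| (transpose_mul E Eᵀ).trans (by rw [transpose_transpose])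
  have hBnorm := hB.norm_toLp_mulVec_le hlam0 fun μ v hv =>
    abs_le_of_sub_mulVec_eq_smul hPA hPP hfix hlam0 hOther hv
  refine distTo_le_mul_of_forall_exists (by exact ⟨0, 0, (Matrix.mul_zero E).symm⟩) hlam0 ?_
  rintro _ ⟨Cm, rfl⟩
  refine ⟨E * (Cm + Eᵀ * (H - E * Cm)), ⟨_, rfl⟩, ?_⟩
  have hres : hatA * H - E * (Cm + Eᵀ * (H - E * Cm)) = (hatA - P) * (H - E * Cm) := by
    rw [Matrix.sub_mul, Matrix.mul_sub hatA, ← Matrix.mul_assoc hatA, hAE, Matrix.mul_add,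
      ← Matrix.mul_assoc E Eᵀ]
    abel
  rw [hres]
  exact frobNorm_mul_le_of_forall_norm_mulVec_le hlam0 hBnorm _

/-- For a symmetric `Â` whose eigenvalue-1 eigenspace is the column span of the
orthonormal `Ê`, and all other eigenvalues obey `|μ| ≤ λ < 1`, we have
`d_M(ÂH) ≤ λ · d_M(H)`. -/
theorem dist_to_subspace_mul_adjacency
    (N M C : ℕ) (hatA : Matrix (Fin N) (Fin N) ℝ) (hsymm : hatA.IsSymm)
    (E : Matrix (Fin N) (Fin M) ℝ) (hortho : Eᵀ * E = 1)
    (lam : ℝ) (hlam0 : 0 ≤ lam) (hlam1 : lam < 1)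
    (hEig1 : ∀ v : Fin N → ℝ, hatA.mulVec v = v ↔
      v ∈ Submodule.span ℝ (Set.range fun m => fun i => E i m))
    (hOther : ∀ (μ : ℝ) (v : Fin N → ℝ), v ≠ 0 → hatA.mulVec v = μ • v →
      μ = 1 ∨ |μ| ≤ lam)
    (MS : Set (Matrix (Fin N) (Fin C) ℝ))
    (hMS : MS = {H | ∃ Cm : Matrix (Fin M) (Fin C) ℝ, H = E * Cm})
    (H : Matrix (Fin N) (Fin C) ℝ) :
    distTo MS (hatA * H) ≤ lam * distTo MS H :=
  dist_to_subspace_mul_adjacency_general N M C hatA hsymm E hortho lam hlam0 hEig1 hOther MS hMS H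
end

section
/- Let M = {ÊC : C ∈ ℝ^{M×C}} where Ê ∈ ℝ^{N×M} has entrywise non-negative entries (e.g., Ê = (D+I)^{1/2}U with U a 0/1 indicator matrix of connected components with orthogonal columns). Let σ denote entrywise ReLU. Then for any H ∈ ℝ^{N×C}, d_M(σ(H)) ≤ d_M(H). -/
open Matrix

/-- Entrywise ReLU of a matrix. -/
def relu {N C : ℕ} (H : Matrix (Fin N) (Fin C) ℝ) : Matrix (Fin N) (Fin C) ℝ :=
  Matrix.of fun i j => max (H i j) 0

/-!
Entrywise ReLU is 1-Lipschitz for the Frobenius norm, since `|max a 0 - max b 0| ≤ |a - b|`, and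
it maps `M` into itself: each row of `Ê` has at most one non-zero entry, which is positive, so
`σ(ÊC) = Ê σ(C)`. Hence for every `Y ∈ M`, `d_M(σ(H)) ≤ ‖σ(H) - σ(Y)‖_F ≤ ‖H - Y‖_F`.
-/

section Distance

variable {N C : ℕ}

theorem frobNorm_relu_sub_relu_le (A B : Matrix (Fin N) (Fin C) ℝ) :
    frobNorm (relu A - relu B) ≤ frobNorm (A - B) := by
  refine Real.sqrt_le_sqrt (Finset.sum_le_sum fun i _ => Finset.sum_le_sum fun j _ => ?_)
  simpa only [Matrix.sub_apply, relu, of_apply, sq_abs] using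
    pow_le_pow_left₀ (abs_nonneg _) (abs_max_sub_max_le_abs (A i j) (B i j) 0) 2

theorem distTo_map_le {S : Set (Matrix (Fin N) (Fin C) ℝ)} (hS : S.Nonempty)
    {f : Matrix (Fin N) (Fin C) ℝ → Matrix (Fin N) (Fin C) ℝ} (hfS : Set.MapsTo f S S)
    (hf : ∀ A B, frobNorm (f A - f B) ≤ frobNorm (A - B)) (H : Matrix (Fin N) (Fin C) ℝ) :
    distTo S (f H) ≤ distTo S H := by
  have hbdd : BddBelow ((fun Y => frobNorm (f H - Y)) '' S) :=
    ⟨0, Set.forall_mem_image.2 fun _ _ => Real.sqrt_nonneg _⟩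
  refine le_csInf (hS.image _) (Set.forall_mem_image.2 fun Y hY => ?_)
  calc distTo S (f H) ≤ frobNorm (f H - f Y) := csInf_le hbdd ⟨f Y, hfS hY, rfl⟩
    _ ≤ frobNorm (H - Y) := hf H Y

end Distance

section DisjointSupport

variable {ι : Type*} [Fintype ι]

theorem max_sum_mul_zero_of_nonneg_of_subsingleton_support (e c : ι → ℝ) (he : ∀ m, 0 ≤ e m)
    (hsupp : ∀ m m', e m ≠ 0 → e m' ≠ 0 → m = m') :
    max (∑ m, e m * c m) 0 = ∑ m, e m * max (c m) 0 := by
  by_cases hzero : ∀ m, e m = 0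
  · simp [hzero]
  push Not at hzero
  obtain ⟨m₀, hm₀⟩ := hzero
  have he_eq_zero : ∀ m, m ≠ m₀ → e m = 0 := fun m hm => by
    by_contra h
    exact hm (hsupp m m₀ h hm₀)
  rw [Fintype.sum_eq_single m₀ fun m hm => by rw [he_eq_zero m hm, zero_mul],
    Fintype.sum_eq_single m₀ fun m hm => by rw [he_eq_zero m hm, zero_mul],
    mul_max_of_nonneg _ _ (he m₀), mul_zero]

variable {N C : ℕ}

theorem relu_mul_of_nonneg_of_subsingleton_support (E : Matrix (Fin N) ι ℝ)
    (hnonneg : ∀ i m, 0 ≤ E i m) (hsupp : ∀ i m m', E i m ≠ 0 → E i m' ≠ 0 → m = m')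
    (X : Matrix ι (Fin C) ℝ) :
    relu (E * X) = E * Matrix.of fun m j => max (X m j) 0 := by
  ext i j
  exact max_sum_mul_zero_of_nonneg_of_subsingleton_support (E i) (X · j) (hnonneg i) (hsupp i)

end DisjointSupport

/-- If `Ê` has non-negative entries whose columns have disjoint supports
(indicators of connected components scaled by positive degrees), then the
distance to `M = {ÊC}` is non-expansive under entrywise ReLU:
`d_M(σ(H)) ≤ d_M(H)`. -/
theorem dist_to_subspace_relu_nonexpansive
    (N M C : ℕ) (E : Matrix (Fin N) (Fin M) ℝ)
    (hnonneg : ∀ i m, 0 ≤ E i m)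
    (hdisj : ∀ i m m', E i m ≠ 0 → E i m' ≠ 0 → m = m')
    (MS : Set (Matrix (Fin N) (Fin C) ℝ))
    (hMS : MS = {H | ∃ Cm : Matrix (Fin M) (Fin C) ℝ, H = E * Cm})
    (H : Matrix (Fin N) (Fin C) ℝ) :
    distTo MS (relu H) ≤ distTo MS H := by
  subst hMS
  have hrelu_mem : Set.MapsTo relu {H | ∃ Cm : Matrix (Fin M) (Fin C) ℝ, H = E * Cm}
      {H | ∃ Cm : Matrix (Fin M) (Fin C) ℝ, H = E * Cm} := by
    rintro _ ⟨Cm, rfl⟩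
    exact ⟨_, relu_mul_of_nonneg_of_subsingleton_support E hnonneg hdisj Cm⟩
  refine distTo_map_le ?_ hrelu_mem frobNorm_relu_sub_relu_le H
  exact ⟨0, 0, (Matrix.mul_zero E).symm⟩
end

section
/- Consider the GCN-with-bias layer H_{l+1} = σ(ÂH_lW_l + b_l), with the assumptions of the generic GCN case (contraction factor v = sλ < 1) and suppose d_M(b_l) = c for all l. Set r = c/(1−v). Then d_M(H_{l+1}) − r ≤ v(d_M(H_l) − r), and consequently d_M(H_l) ≤ r + v^l(d_M(H_0) − r); so limsup_{l→∞} d_M(H_l) ≤ r. -/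
/-!
`d_M` is the Frobenius distance to the subspace `S = {E Cm}`, i.e. the norm in the quotient by
`S`, hence subadditive.
ReLU is `1`-Lipschitz and maps `S` into itself (the columns of `E` are non-negative with disjoint
supports), so it does not increase `d_M`. For `Y ∈ S`, `Â X W` differs from an element of `S` by
`(Â - E Eᵀ) (X - Y) W`; the symmetric matrix `Â - E Eᵀ` removes the eigenvalue `1` of `Â`, so it
contracts the Frobenius norm by `λ`, while `W` contracts it by `s`. Hence
`d_M(H_{l+1}) ≤ v d_M(H_l) + c`, and the rest is the affine recursion `u_{l+1} - r ≤ v (u_l - r)`.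
-/

open Matrix Filter

open Topology Metric

attribute [local instance] Matrix.frobeniusNormedAddCommGroup

namespace Metric

variable {α : Type*} [PseudoMetricSpace α]

theorem le_mul_infDist {x : α} {s : Set α} {a k : ℝ} (hs : s.Nonempty) (hk : 0 ≤ k)
    (h : ∀ y ∈ s, a ≤ k * dist x y) : a ≤ k * infDist x s := by
  have : Nonempty s := hs.to_subtype
  rw [infDist_eq_iInf, Real.mul_iInf_of_nonneg hk]
  exact le_ciInf fun y => h y y.2

theorem infDist_add_le {E : Type*} [SeminormedAddCommGroup E] (S : AddSubgroup E) (x z : E) :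
    infDist (x + z) S ≤ infDist x S + infDist z S := by
  have := norm_add_le (x : E ⧸ S) (z : E ⧸ S)
  rwa [← QuotientAddGroup.mk_add, QuotientAddGroup.norm_mk, QuotientAddGroup.norm_mk,
    QuotientAddGroup.norm_mk] at this

end Metric

theorem LipschitzWith.infDist_apply_le {α : Type*} [PseudoMetricSpace α] {f : α → α} {K : NNReal}
    (hf : LipschitzWith K f) {s : Set α} (hs : Set.MapsTo f s s) (x : α) :
    infDist (f x) s ≤ K * infDist x s := by
  rcases s.eq_empty_or_nonempty with rfl | hne
  · simp
  exact le_mul_infDist hne K.2 fun y hy =>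
    (infDist_le_dist_of_mem (hs hy)).trans (hf.dist_le_mul x y)

theorem LinearMap.IsSymmetric.norm_apply_le_of_hasEigenvalue {E : Type*} [NormedAddCommGroup E]
    [InnerProductSpace ℝ E] [FiniteDimensional ℝ E] {T : E →ₗ[ℝ] E} (hT : T.IsSymmetric)
    {lam : ℝ} (hlam : 0 ≤ lam) (h : ∀ μ, Module.End.HasEigenvalue T μ → |μ| ≤ lam) (x : E) :
    ‖T x‖ ≤ lam * ‖x‖ := by
  set b := hT.eigenvectorBasis rfl
  refine (pow_le_pow_iff_left₀ (norm_nonneg _) (by positivity) two_ne_zero).1 ?_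
  rw [← b.repr.norm_map, ← b.repr.norm_map x, mul_pow, EuclideanSpace.real_norm_sq_eq,
    EuclideanSpace.real_norm_sq_eq, Finset.mul_sum]
  refine Finset.sum_le_sum fun i _ => ?_
  rw [hT.eigenvectorBasis_apply_self_apply, mul_pow]
  have hμ := abs_le.1 (h _ (hT.hasEigenvalue_eigenvalues rfl i))
  exact mul_le_mul_of_nonneg_right (sq_le_sq' hμ.1 hμ.2) (sq_nonneg _)

namespace Matrix

variable {m n p : Type*} [Fintype m] [Fintype n] [Fintype p]

theorem frobenius_norm_sq_eq_sum (A : Matrix m n ℝ) : ‖A‖ ^ 2 = ∑ i, ∑ j, A i j ^ 2 := by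
  rw [frobenius_norm_def, ← Real.rpow_natCast, ← Real.rpow_mul (by positivity)]
  norm_num [Real.norm_eq_abs, sq_abs]

theorem frobenius_norm_mul_le_of_vecMul {W : Matrix n p ℝ} {s : ℝ} (hs : 0 ≤ s)
    (hW : ∀ x, ∑ j, (x ᵥ* W) j ^ 2 ≤ s ^ 2 * ∑ j, x j ^ 2) (Y : Matrix m n ℝ) :
    ‖Y * W‖ ≤ s * ‖Y‖ := by
  refine (pow_le_pow_iff_left₀ (norm_nonneg _) (by positivity) two_ne_zero).1 ?_
  rw [mul_pow, frobenius_norm_sq_eq_sum, frobenius_norm_sq_eq_sum, Finset.mul_sum]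
  exact Finset.sum_le_sum fun i _ => hW (Y i)

theorem frobenius_norm_mul_le_of_mulVec {B : Matrix m n ℝ} {s : ℝ} (hs : 0 ≤ s)
    (hB : ∀ x, ∑ i, (B *ᵥ x) i ^ 2 ≤ s ^ 2 * ∑ i, x i ^ 2) (Z : Matrix n p ℝ) :
    ‖B * Z‖ ≤ s * ‖Z‖ := by
  rw [← frobenius_norm_transpose, transpose_mul, ← frobenius_norm_transpose Z]
  exact frobenius_norm_mul_le_of_vecMul hs (fun x => by simpa only [vecMul_transpose] using hB x) _

theorem IsSymm.sum_sq_mulVec_le [DecidableEq n] {B : Matrix n n ℝ} (hB : B.IsSymm) {lam : ℝ}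
    (hlam : 0 ≤ lam) (h : ∀ (μ : ℝ) (w : n → ℝ), w ≠ 0 → B *ᵥ w = μ • w → |μ| ≤ lam)
    (x : n → ℝ) : ∑ i, (B *ᵥ x) i ^ 2 ≤ lam ^ 2 * ∑ i, x i ^ 2 := by
  have hT : (toEuclideanLin B).IsSymmetric :=
    isSymmetric_toEuclideanLin_iff.2 ((conjTranspose_eq_transpose_of_trivial B).trans hB)
  have hx := hT.norm_apply_le_of_hasEigenvalue hlam (fun μ hμ => ?_) (WithLp.toLp 2 x)
  · have := pow_le_pow_left₀ (norm_nonneg _) hx 2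
    rwa [mul_pow, EuclideanSpace.real_norm_sq_eq, EuclideanSpace.real_norm_sq_eq] at this
  obtain ⟨w, hw⟩ := hμ.exists_hasEigenvector
  exact h μ w.ofLp (by simpa using hw.2) (congrArg WithLp.ofLp hw.apply_eq_smul)

end Matrix

theorem frobNorm_eq_norm {N C : ℕ} (A : Matrix (Fin N) (Fin C) ℝ) : frobNorm A = ‖A‖ := by
  rw [frobNorm, ← frobenius_norm_sq_eq_sum, Real.sqrt_sq (norm_nonneg _)]

theorem distTo_eq_infDist {N C : ℕ} (S : Set (Matrix (Fin N) (Fin C) ℝ))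
    (X : Matrix (Fin N) (Fin C) ℝ) : distTo S X = infDist X S := by
  simp only [distTo, infDist_eq_iInf, sInf_image', frobNorm_eq_norm, dist_eq_norm]

theorem lipschitzWith_one_relu {N C : ℕ} : LipschitzWith 1 (relu : Matrix (Fin N) (Fin C) ℝ → _) := by
  refine LipschitzWith.of_dist_le_mul fun X Y => ?_
  rw [NNReal.coe_one, one_mul, dist_eq_norm, dist_eq_norm]
  refine (pow_le_pow_iff_left₀ (norm_nonneg _) (norm_nonneg _) two_ne_zero).1 ?_
  rw [frobenius_norm_sq_eq_sum, frobenius_norm_sq_eq_sum]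
  refine Finset.sum_le_sum fun i _ => Finset.sum_le_sum fun j _ => sq_le_sq.2 ?_
  simpa [relu] using abs_max_sub_max_le_abs (X i j) (Y i j) 0

section ColumnSpace

variable {n k : Type*} [Fintype k]

/-- The paper's subspace `M = {Ê C}`. -/
def mulLeftRange (E : Matrix n k ℝ) (d : Type*) : AddSubgroup (Matrix n d ℝ) where
  carrier := {H | ∃ Cm : Matrix k d ℝ, H = E * Cm}
  add_mem' := by
    rintro _ _ ⟨A, rfl⟩ ⟨B, rfl⟩
    exact ⟨A + B, (Matrix.mul_add E A B).symm⟩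
  zero_mem' := ⟨0, (Matrix.mul_zero E).symm⟩
  neg_mem' := by
    rintro _ ⟨A, rfl⟩
    exact ⟨-A, (Matrix.mul_neg E A).symm⟩

theorem mul_mem_mulLeftRange {d : Type*} (E : Matrix n k ℝ) (Cm : Matrix k d ℝ) :
    E * Cm ∈ mulLeftRange E d := ⟨Cm, rfl⟩

theorem mul_apply_eq_of_ne_zero {d : Type*} {E : Matrix n k ℝ}
    (hdisj : ∀ i m m', E i m ≠ 0 → E i m' ≠ 0 → m = m') {i : n} {m₀ : k} (hm₀ : E i m₀ ≠ 0)
    (Cm : Matrix k d ℝ) (j : d) : (E * Cm) i j = E i m₀ * Cm m₀ j := by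
  rw [mul_apply]
  refine Finset.sum_eq_single m₀ (fun m _ hm => ?_) (by simp)
  exact mul_eq_zero_of_left (not_not.1 fun h => hm (hdisj i m m₀ h hm₀)) _

end ColumnSpace

section Relu

variable {N K C : ℕ} {E : Matrix (Fin N) (Fin K) ℝ}

theorem relu_mul_eq_mul_relu (hnonneg : ∀ i m, 0 ≤ E i m)
    (hdisj : ∀ i m m', E i m ≠ 0 → E i m' ≠ 0 → m = m') (Cm : Matrix (Fin K) (Fin C) ℝ) :
    relu (E * Cm) = E * relu Cm := by
  ext i j
  by_cases hrow : ∀ m, E i m = 0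
  · simp [relu, mul_apply, hrow]
  obtain ⟨m₀, hm₀⟩ := not_forall.1 hrow
  simp only [relu, of_apply, mul_apply_eq_of_ne_zero hdisj hm₀]
  rw [mul_max_of_nonneg _ _ (hnonneg i m₀), mul_zero]

theorem relu_mapsTo_mulLeftRange (hnonneg : ∀ i m, 0 ≤ E i m)
    (hdisj : ∀ i m m', E i m ≠ 0 → E i m' ≠ 0 → m = m') :
    Set.MapsTo (relu : Matrix (Fin N) (Fin C) ℝ → _) (mulLeftRange E (Fin C))
      (mulLeftRange E (Fin C)) := by
  rintro _ ⟨Cm, rfl⟩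
  rw [relu_mul_eq_mul_relu hnonneg hdisj]
  exact mul_mem_mulLeftRange E _

end Relu

section Propagation

variable {n k d : Type*} [Fintype n] [Fintype k]
  {A : Matrix n n ℝ} {E : Matrix n k ℝ}

theorem mulVec_eq_self_iff_exists (hEig1 : ∀ v : n → ℝ, A *ᵥ v = v ↔
      v ∈ Submodule.span ℝ (Set.range fun m => fun i => E i m)) (v : n → ℝ) :
    A *ᵥ v = v ↔ ∃ c, E *ᵥ c = v := by
  rw [hEig1]
  change v ∈ Submodule.span ℝ (Set.range E.col) ↔ _
  rw [← range_mulVecLin]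
  rfl

theorem mul_eq_of_mulVec_eq_self_iff (hfix : ∀ v : n → ℝ, A *ᵥ v = v ↔ ∃ c, E *ᵥ c = v) :
    A * E = E :=
  ext_iff_mulVec.2 fun c => by rw [← mulVec_mulVec]; exact (hfix _).2 ⟨c, rfl⟩

theorem abs_le_of_sub_mulVec_eq_smul [DecidableEq k] (hsymm : A.IsSymm) (hortho : Eᵀ * E = 1)
    (hfix : ∀ v : n → ℝ, A *ᵥ v = v ↔ ∃ c, E *ᵥ c = v) {lam : ℝ} (hlam : 0 ≤ lam)
    (hOther : ∀ (μ : ℝ) (v : n → ℝ), v ≠ 0 → A *ᵥ v = μ • v → μ = 1 ∨ |μ| ≤ lam)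
    (μ : ℝ) (w : n → ℝ) (hw : w ≠ 0) (hμw : (A - E * Eᵀ) *ᵥ w = μ • w) : |μ| ≤ lam := by
  rcases eq_or_ne μ 0 with rfl | hμ
  · simpa using hlam
  have hEA : Eᵀ * A = Eᵀ := by
    rw [← hsymm.eq, ← transpose_mul, mul_eq_of_mulVec_eq_self_iff hfix]
  have hEB : Eᵀ * (A - E * Eᵀ) = 0 := by
    rw [Matrix.mul_sub, hEA, ← Matrix.mul_assoc, hortho, Matrix.one_mul, sub_self]
  have hEw : Eᵀ *ᵥ w = 0 := by
    have h := congrArg (Eᵀ *ᵥ ·) hμw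
    simp only [mulVec_mulVec, hEB, zero_mulVec, mulVec_smul] at h
    exact (smul_eq_zero.1 h.symm).resolve_left hμ
  have hAw : A *ᵥ w = μ • w := by
    rwa [sub_mulVec, ← mulVec_mulVec, hEw, mulVec_zero, sub_zero] at hμw
  refine (hOther μ w hw hAw).resolve_left fun h1 => hw ?_
  obtain ⟨c, rfl⟩ := (hfix w).1 (by rw [hAw, h1, one_smul])
  rw [mulVec_mulVec, hortho, one_mulVec] at hEw
  rw [hEw, mulVec_zero]

theorem frobenius_norm_sub_mul_le [DecidableEq n] [DecidableEq k] [Fintype d] (hsymm : A.IsSymm)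
    (hortho : Eᵀ * E = 1)
    (hfix : ∀ v : n → ℝ, A *ᵥ v = v ↔ ∃ c, E *ᵥ c = v) {lam : ℝ} (hlam : 0 ≤ lam)
    (hOther : ∀ (μ : ℝ) (v : n → ℝ), v ≠ 0 → A *ᵥ v = μ • v → μ = 1 ∨ |μ| ≤ lam)
    (Z : Matrix n d ℝ) : ‖(A - E * Eᵀ) * Z‖ ≤ lam * ‖Z‖ := by
  have hB : (A - E * Eᵀ).IsSymm := by
    rw [IsSymm, transpose_sub, hsymm.eq, transpose_mul, transpose_transpose]
  exact frobenius_norm_mul_le_of_mulVec hlam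
    (hB.sum_sq_mulVec_le hlam (abs_le_of_sub_mulVec_eq_smul hsymm hortho hfix hlam hOther)) Z

theorem infDist_mul_mul_le [Fintype d] (hAE : A * E = E) {lam s : ℝ} (hlam : 0 ≤ lam)
    (hs : 0 ≤ s)
    (hB : ∀ Z : Matrix n d ℝ, ‖(A - E * Eᵀ) * Z‖ ≤ lam * ‖Z‖) {W : Matrix d d ℝ}
    (hW : ∀ Y : Matrix n d ℝ, ‖Y * W‖ ≤ s * ‖Y‖) (X : Matrix n d ℝ) :
    infDist (A * X * W) (mulLeftRange E d) ≤ s * lam * infDist X (mulLeftRange E d) := by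
  refine le_mul_infDist ⟨0, zero_mem _⟩ (mul_nonneg hs hlam) fun Y hY => ?_
  obtain ⟨Cm, rfl⟩ := hY
  have hmem : A * X * W - (A - E * Eᵀ) * (X - E * Cm) * W ∈ mulLeftRange E d := by
    refine ⟨Cm * W + Eᵀ * (X - E * Cm) * W, ?_⟩
    have hAEC : A * (E * Cm) = E * Cm := by rw [← Matrix.mul_assoc, hAE]
    rw [Matrix.sub_mul A, Matrix.mul_sub A, hAEC]
    simp only [Matrix.mul_sub, Matrix.sub_mul, Matrix.mul_add, Matrix.mul_assoc]
    abel
  calc infDist (A * X * W) (mulLeftRange E d)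
      ≤ ‖(A - E * Eᵀ) * (X - E * Cm) * W‖ := by
        simpa [dist_eq_norm] using infDist_le_dist_of_mem (x := A * X * W) hmem
    _ ≤ s * (lam * ‖X - E * Cm‖) := (hW _).trans (by gcongr; exact hB _)
    _ = s * lam * dist X (E * Cm) := by rw [dist_eq_norm, mul_assoc]

end Propagation

section AffineRecursion

variable {u : ℕ → ℝ} {r v : ℝ}

theorem le_add_pow_mul_of_sub_le_mul_sub (hv : 0 ≤ v) (h : ∀ l, u (l + 1) - r ≤ v * (u l - r))
    (l : ℕ) : u l ≤ r + v ^ l * (u 0 - r) := by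
  induction l with
  | zero => simp
  | succ l ih =>
    have := mul_le_mul_of_nonneg_left (sub_le_iff_le_add'.2 ih) hv
    rw [pow_succ', mul_assoc]
    linarith [h l]

theorem limsup_le_of_le_add_pow_mul {K : ℝ} (hv0 : 0 ≤ v) (hv1 : v < 1)
    (hu : IsBoundedUnder (· ≥ ·) atTop u) (h : ∀ l, u l ≤ r + v ^ l * K) :
    limsup u atTop ≤ r := by
  have hlim : Tendsto (fun l => r + v ^ l * K) atTop (𝓝 r) := by
    simpa using tendsto_const_nhds.add ((tendsto_pow_atTop_nhds_zero_of_lt_one hv0 hv1).mul_const K)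
  calc limsup u atTop ≤ limsup (fun l => r + v ^ l * K) atTop :=
        limsup_le_limsup (Eventually.of_forall h) hu.isCoboundedUnder_le hlim.isBoundedUnder_le
    _ = r := hlim.limsup_eq

end AffineRecursion

theorem gcn_bias_over_smoothing_general
    (N M C : ℕ) (hatA : Matrix (Fin N) (Fin N) ℝ) (hsymm : hatA.IsSymm)
    (E : Matrix (Fin N) (Fin M) ℝ) (hortho : Eᵀ * E = 1)
    (hnonneg : ∀ i m, 0 ≤ E i m)
    (hdisj : ∀ i m m', E i m ≠ 0 → E i m' ≠ 0 → m = m')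
    (lam : ℝ) (hlam0 : 0 ≤ lam)
    (hEig1 : ∀ v : Fin N → ℝ, hatA.mulVec v = v ↔
      v ∈ Submodule.span ℝ (Set.range fun m => fun i => E i m))
    (hOther : ∀ (μ : ℝ) (v : Fin N → ℝ), v ≠ 0 → hatA.mulVec v = μ • v →
      μ = 1 ∨ |μ| ≤ lam)
    (s : ℝ) (hs : 0 ≤ s)
    (W : ℕ → Matrix (Fin C) (Fin C) ℝ)
    (hW : ∀ l, ∀ x : Fin C → ℝ,
      ∑ j, (Matrix.vecMul x (W l) j) ^ 2 ≤ s ^ 2 * ∑ j, (x j) ^ 2)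
    (MS : Set (Matrix (Fin N) (Fin C) ℝ))
    (hMS : MS = {H | ∃ Cm : Matrix (Fin M) (Fin C) ℝ, H = E * Cm})
    (b : ℕ → Fin C → ℝ) (c : ℝ)
    (hc : ∀ l, distTo MS (Matrix.of fun _ j => b l j) = c)
    (v r : ℝ) (hv : v = s * lam) (hv1 : v < 1) (hr : r = c / (1 - v))
    (H : ℕ → Matrix (Fin N) (Fin C) ℝ)
    (hrec : ∀ l, H (l + 1) = relu (hatA * H l * W l + Matrix.of fun _ j => b l j)) :
    (∀ l, distTo MS (H (l + 1)) - r ≤ v * (distTo MS (H l) - r)) ∧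
    (∀ l, distTo MS (H l) ≤ r + v ^ l * (distTo MS (H 0) - r)) ∧
    limsup (fun l => distTo MS (H l)) atTop ≤ r := by
  obtain rfl : MS = (mulLeftRange E (Fin C) : Set (Matrix (Fin N) (Fin C) ℝ)) := hMS
  simp only [distTo_eq_infDist] at hc ⊢
  set S : Set (Matrix (Fin N) (Fin C) ℝ) := ↑(mulLeftRange E (Fin C))
  have hfix := mulVec_eq_self_iff_exists hEig1
  have hstep : ∀ l, infDist (H (l + 1)) S ≤ v * infDist (H l) S + c := fun l => by
    rw [hrec l, hv, ← hc l]
    have hrelu := lipschitzWith_one_relu.infDist_apply_le (relu_mapsTo_mulLeftRange hnonneg hdisj)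
      (hatA * H l * W l + of fun _ j => b l j)
    have hadd := infDist_add_le (mulLeftRange E (Fin C)) (hatA * H l * W l) (of fun _ j => b l j)
    have hmul := infDist_mul_mul_le (mul_eq_of_mulVec_eq_self_iff hfix) hlam0 hs
      (frobenius_norm_sub_mul_le hsymm hortho hfix hlam0 hOther)
      (frobenius_norm_mul_le_of_vecMul hs (hW l)) (H l)
    rw [NNReal.coe_one, one_mul] at hrelu
    linarith
  have hcontract : ∀ l, infDist (H (l + 1)) S - r ≤ v * (infDist (H l) S - r) := fun l => by
    have : r - v * r = c := by rw [hr]; field_simp [(sub_pos.2 hv1).ne']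
    linarith [hstep l]
  have hv0 : 0 ≤ v := hv ▸ mul_nonneg hs hlam0
  have hbound := le_add_pow_mul_of_sub_le_mul_sub (u := fun l => infDist (H l) S) hv0 hcontract
  exact ⟨hcontract, hbound,
    limsup_le_of_le_add_pow_mul hv0 hv1 (isBoundedUnder_of ⟨0, fun _ => infDist_nonneg⟩) hbound⟩

/-- GCN with bias `H_{l+1} = σ(Â H_l W_l + b_l)` converges to the cuboid
`O(M, r)` with `r = d_M(b)/(1 - sλ)`:
`d_M(H_{l+1}) - r ≤ v (d_M(H_l) - r)`, hence
`d_M(H_l) ≤ r + v^l (d_M(H_0) - r)`, and `limsup d_M(H_l) ≤ r`. -/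
theorem gcn_bias_over_smoothing
    (N M C : ℕ) (hatA : Matrix (Fin N) (Fin N) ℝ) (hsymm : hatA.IsSymm)
    (E : Matrix (Fin N) (Fin M) ℝ) (hortho : Eᵀ * E = 1)
    (hnonneg : ∀ i m, 0 ≤ E i m)
    (hdisj : ∀ i m m', E i m ≠ 0 → E i m' ≠ 0 → m = m')
    (lam : ℝ) (hlam0 : 0 ≤ lam) (hlam1 : lam < 1)
    (hEig1 : ∀ v : Fin N → ℝ, hatA.mulVec v = v ↔
      v ∈ Submodule.span ℝ (Set.range fun m => fun i => E i m))
    (hOther : ∀ (μ : ℝ) (v : Fin N → ℝ), v ≠ 0 → hatA.mulVec v = μ • v →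
      μ = 1 ∨ |μ| ≤ lam)
    (s : ℝ) (hs : 0 ≤ s)
    (W : ℕ → Matrix (Fin C) (Fin C) ℝ)
    (hW : ∀ l, ∀ x : Fin C → ℝ,
      ∑ j, (Matrix.vecMul x (W l) j) ^ 2 ≤ s ^ 2 * ∑ j, (x j) ^ 2)
    (MS : Set (Matrix (Fin N) (Fin C) ℝ))
    (hMS : MS = {H | ∃ Cm : Matrix (Fin M) (Fin C) ℝ, H = E * Cm})
    (b : ℕ → Fin C → ℝ) (c : ℝ)
    (hc : ∀ l, distTo MS (Matrix.of fun _ j => b l j) = c)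
    (v r : ℝ) (hv : v = s * lam) (hv1 : v < 1) (hr : r = c / (1 - v))
    (H : ℕ → Matrix (Fin N) (Fin C) ℝ)
    (hrec : ∀ l, H (l + 1) = relu (hatA * H l * W l + Matrix.of fun _ j => b l j)) :
    (∀ l, distTo MS (H (l + 1)) - r ≤ v * (distTo MS (H l) - r)) ∧
    (∀ l, distTo MS (H l) ≤ r + v ^ l * (distTo MS (H 0) - r)) ∧
    limsup (fun l => distTo MS (H l)) atTop ≤ r :=
  gcn_bias_over_smoothing_general N M C hatA hsymm E hortho hnonneg hdisj lam hlam0 hEig1 hOther s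
    hs W hW MS hMS b c hc v r hv hv1 hr H hrec
end
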